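/- arXiv:2112.00308 — 2 statements merged into one kernel-verified Lean document; each statement's English description precedes it below -/
import Mathlib

section
/- Let N ≥ 2 be an integer, let d be a positive integer, and let z_1, …, z_N : ℕ → ℂ be sequences. Define t(k) = ∑ z_1(i_1)·z_2(i_2)⋯z_N(i_N), the sum being over all N-tuples (i_1,…,i_N) of nonnegative integers with i_1 + ⋯ + i_N = k. Suppose that for every j ∈ {1,…,N} and every k ∈ ℕ with (d−1)/N < k < d one has z_j(k) = 0, and that z_j(l·d + k) = z_j(l·d)·z_j(k) for every j and all k, l ∈ ℕ with 0 ≤ k < d. Then for every positive multiple n of d, ∑_{k=0}^{n−1} t(k) = ( ∑_{l=0}^{n/d−1} ∑_{i_1+⋯+i_N = l} z_1(i_1·d)⋯z_N(i_N·d) ) · ( ∑_{k=0}^{d−1} t(k) ), where the inner sum is over all N-tuples (i_1,…,i_N) of nonnegative integers with i_1 + ⋯ + i_N = l. -/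
/-!
Write every index as `i = u * d + w` with `w < d`; multiplicativity factors
`z j i = z j (u * d) * z j w`. The vanishing hypothesis says `N * w < d` whenever `z j w ≠ 0`,
so the remainders of a tuple with nonzero product sum to less than `d`. Hence the splitting
`v = u * d + w` is a bijection between contributing tuples of weight `l * d + r` (with `r < d`)
and pairs of tuples of weights `l` and `r`, i.e. `t (l * d + r) = T l * t r`, where `T` is the
Cauchy product of the subsampled sequences `i ↦ z j (i * d)`. Summing over `l < n / d` and
`r < d` gives the identity.
-/

open Finset

theorem sum_range_mul_eq_sum_sum {M : Type*} [AddCommMonoid M] (g : ℕ → M) (d m : ℕ) :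
    ∑ k ∈ range (d * m), g k = ∑ l ∈ range m, ∑ r ∈ range d, g (l * d + r) := by
  induction m with
  | zero => simp
  | succ m ih => rw [Nat.mul_succ, sum_range_add, ih, sum_range_succ, Nat.mul_comm d m]

theorem sum_lt_of_forall_mul_lt {N d : ℕ} (hN : 0 < N) {w : Fin N → ℕ}
    (hw : ∀ j, N * w j < d) : ∑ j, w j < d := by
  have : N * ∑ j, w j < N * d := by
    rw [mul_sum]
    simpa using sum_lt_sum_of_nonempty (univ_nonempty_iff.2 ⟨⟨0, hN⟩⟩) fun j _ => hw j
  exact Nat.lt_of_mul_lt_mul_left this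

theorem Nat.eq_and_eq_of_mul_add_eq {d a b a' b' : ℕ} (hb : b < d) (hb' : b' < d)
    (h : a * d + b = a' * d + b') : a = a' ∧ b = b' := by
  have hd : 0 < d := by omega
  have digits (x y : ℕ) (hy : y < d) : (x * d + y) / d = x ∧ (x * d + y) % d = y :=
    (Nat.div_mod_unique hd).2 ⟨by ring, hy⟩
  obtain ⟨h₁, h₂⟩ := digits a b hb
  obtain ⟨h₁', h₂'⟩ := digits a' b' hb'
  rw [h] at h₁ h₂
  exact ⟨h₁.symm.trans h₁', h₂.symm.trans h₂'⟩

theorem Finset.Nat.le_of_mem_antidiagonalTuple {N k : ℕ} {v : Fin N → ℕ}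
    (hv : v ∈ Nat.antidiagonalTuple N k) (j : Fin N) : v j ≤ k :=
  Nat.mem_antidiagonalTuple.1 hv ▸ single_le_sum (fun _ _ => Nat.zero_le _) (mem_univ j)

theorem mul_lt_of_not_sub_one_div_lt {N d k : ℕ} (hN : 0 < N) (h : ¬((d : ℚ) - 1) / N < k) :
    N * k < d := by
  rw [not_lt, le_div_iff₀ (by exact_mod_cast hN)] at h
  exact_mod_cast (show (N * k : ℚ) < d by linarith)

section CauchyProduct

variable {R : Type*} [CommSemiring R] {N d : ℕ}

def cauchyProd (f : Fin N → ℕ → R) (k : ℕ) : R :=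
  ∑ v ∈ Nat.antidiagonalTuple N k, ∏ j, f j (v j)

theorem prod_apply_mul_add {f : Fin N → ℕ → R}
    (hmul : ∀ j k l, k < d → f j (l * d + k) = f j (l * d) * f j k)
    (u : Fin N → ℕ) {w : Fin N → ℕ} (hw : ∀ j, w j < d) :
    ∏ j, f j (u j * d + w j) = (∏ j, f j (u j * d)) * ∏ j, f j (w j) := by
  rw [← prod_mul_distrib]
  exact prod_congr rfl fun j _ => hmul j _ _ (hw j)

theorem cauchyProd_mul_add {f : Fin N → ℕ → R} (hN : 0 < N)
    (hmul : ∀ j k l, k < d → f j (l * d + k) = f j (l * d) * f j k)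
    (hsupp : ∀ j k, f j k ≠ 0 → k < d → N * k < d) (l : ℕ) {r : ℕ} (hr : r < d) :
    cauchyProd f (l * d + r) = cauchyProd (fun j i => f j (i * d)) l * cauchyProd f r := by
  have hd : 0 < d := by omega
  have hlt {w : Fin N → ℕ} (hw : w ∈ Nat.antidiagonalTuple N r) (j : Fin N) : w j < d :=
    (Nat.le_of_mem_antidiagonalTuple hw j).trans_lt hr
  rw [cauchyProd, cauchyProd, cauchyProd, sum_mul_sum, ← sum_product']
  symm
  refine sum_bij_ne_zero (fun p _ _ j => p.1 j * d + p.2 j) ?_ ?_ ?_ ?_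
  · rintro ⟨u, w⟩ huw -
    simp only [mem_product, Nat.mem_antidiagonalTuple] at huw ⊢
    rw [sum_add_distrib, ← sum_mul, huw.1, huw.2]
  · rintro ⟨u, w⟩ huw - ⟨u', w'⟩ huw' - h
    simp only [mem_product] at huw huw'
    have := fun j => Nat.eq_and_eq_of_mul_add_eq (hlt huw.2 j) (hlt huw'.2 j) (congrFun h j)
    simp only [Prod.mk.injEq, funext_iff]
    exact ⟨fun j => (this j).1, fun j => (this j).2⟩
  · intro v hv hfv
    have hdigit : ∀ j, f j (v j % d) ≠ 0 := fun j h0 => hfv <| prod_eq_zero (mem_univ j) <| by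
      rw [← Nat.div_add_mod' (v j) d, hmul j _ _ (Nat.mod_lt _ hd), h0, mul_zero]
    have hsum : (∑ j, v j / d) * d + ∑ j, v j % d = l * d + r := by
      rw [sum_mul, ← sum_add_distrib, ← Nat.mem_antidiagonalTuple.1 hv]
      exact sum_congr rfl fun j _ => Nat.div_add_mod' (v j) d
    obtain ⟨hu, hw⟩ := Nat.eq_and_eq_of_mul_add_eq
      (sum_lt_of_forall_mul_lt hN fun j => hsupp j _ (hdigit j) (Nat.mod_lt _ hd)) hr hsum
    have hv' : (fun j => v j / d * d + v j % d) = v := funext fun j => Nat.div_add_mod' (v j) d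
    refine ⟨(fun j => v j / d, fun j => v j % d), ?_, ?_, hv'⟩
    · simpa only [mem_product, Nat.mem_antidiagonalTuple] using ⟨hu, hw⟩
    · rw [← prod_apply_mul_add hmul _ fun j => Nat.mod_lt _ hd]
      simpa only [Nat.div_add_mod'] using hfv
  · rintro ⟨u, w⟩ huw -
    exact (prod_apply_mul_add hmul u (hlt (mem_product.1 huw).2)).symm

end CauchyProduct

theorem stmt_2_general (N d : ℕ) (hN : 2 ≤ N) (hd : 0 < d) (z : Fin N → ℕ → ℂ)
    (hz : ∀ j : Fin N, ∀ k : ℕ, ((d : ℚ) - 1) / N < (k : ℚ) → k < d → z j k = 0)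
    (hmul : ∀ j : Fin N, ∀ k l : ℕ, k < d → z j (l * d + k) = z j (l * d) * z j k)
    (n : ℕ) (hdvd : d ∣ n) :
    ∑ k ∈ Finset.range n,
        ∑ v ∈ Finset.Nat.antidiagonalTuple N k, ∏ j : Fin N, z j (v j) =
      (∑ l ∈ Finset.range (n / d),
          ∑ v ∈ Finset.Nat.antidiagonalTuple N l, ∏ j : Fin N, z j (v j * d)) *
        ∑ k ∈ Finset.range d,
          ∑ v ∈ Finset.Nat.antidiagonalTuple N k, ∏ j : Fin N, z j (v j) := by
  obtain ⟨m, rfl⟩ := hdvd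
  have hsupp (j : Fin N) (k : ℕ) (hzk : z j k ≠ 0) (hk : k < d) : N * k < d :=
    mul_lt_of_not_sub_one_div_lt (by omega) fun hlt => hzk (hz j k hlt hk)
  change ∑ k ∈ range (d * m), cauchyProd z k =
    (∑ l ∈ range (d * m / d), cauchyProd (fun j i => z j (i * d)) l) *
      ∑ r ∈ range d, cauchyProd z r
  rw [Nat.mul_div_cancel_left m hd, sum_range_mul_eq_sum_sum, sum_mul]
  refine sum_congr rfl fun l _ => ?_
  rw [mul_sum]
  exact sum_congr rfl fun r hr => cauchyProd_mul_add (by omega) hmul hsupp l (mem_range.1 hr)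

theorem stmt_2 (N d : ℕ) (hN : 2 ≤ N) (hd : 0 < d) (z : Fin N → ℕ → ℂ)
    (hz : ∀ j : Fin N, ∀ k : ℕ, ((d : ℚ) - 1) / N < (k : ℚ) → k < d → z j k = 0)
    (hmul : ∀ j : Fin N, ∀ k l : ℕ, k < d → z j (l * d + k) = z j (l * d) * z j k)
    (n : ℕ) (hn : 0 < n) (hdvd : d ∣ n) :
    ∑ k ∈ Finset.range n,
        ∑ v ∈ Finset.Nat.antidiagonalTuple N k, ∏ j : Fin N, z j (v j) =
      (∑ l ∈ Finset.range (n / d),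
          ∑ v ∈ Finset.Nat.antidiagonalTuple N l, ∏ j : Fin N, z j (v j * d)) *
        ∑ k ∈ Finset.range d,
          ∑ v ∈ Finset.Nat.antidiagonalTuple N k, ∏ j : Fin N, z j (v j) :=
  stmt_2_general N d hN hd z hz hmul n hdvd
end

section
/- If p is a prime with p ≡ 1 (mod 4), then both of the following rational numbers are ≡ 0 (mod p^3): (i) ∑_{k=0}^{p−1} ∑_{j=0}^{k} ∑_{i=0}^{k−j} (−1)^k · ((1/4)_j^3/(j!)^3)·((1/4)_i^3/(i!)^3)·((1/4)_{k−j−i}^3/((k−j−i)!)^3)·(8i+1)(8j+1)(8(k−j−i)+1); and (ii) ∑_{k=0}^{p−1} ∑_{j=0}^{k} ∑_{i=0}^{k−j} ∑_{h=0}^{k−j−i} (−1)^k · ((1/4)_j^3/(j!)^3)·((1/4)_i^3/(i!)^3)·((1/4)_h^3/(h!)^3)·((1/4)_{k−j−i−h}^3/((k−j−i−h)!)^3)·(8i+1)(8j+1)(8h+1)(8(k−j−i−h)+1). -/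
/-- The Pochhammer symbol `(a)_k = a·(a+1)⋯(a+k-1)` for a rational `a`. -/
def poch (a : ℚ) (k : ℕ) : ℚ := ∏ j ∈ Finset.range k, (a + (j : ℚ))

/-- `A ≡ B (mod p^m)` for rationals `A`, `B`: either `A = B` or the `p`-adic
valuation of `A - B` is at least `m`. -/
def ratCongr (p : ℕ) (m : ℕ) (A B : ℚ) : Prop :=
  A = B ∨ (m : ℤ) ≤ padicValRat p (A - B)

/-!
Let `a_j = (-1)^j (8j+1) ((1/4)_j / j!)^3` and `A(x) = ∑ a_j x^j`; the two sums are `∑_{k<p}` of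
the coefficients of `A^3` and `A^4`. Write `p = 4M + 1`. Since `1/4 + M = p/4`, the factors of
`(1/4)_j` are congruent mod `p` to those of `∏_{i<j} (i - M) = (-1)^j j! C(M,j)`, so
`(1/4)_j / j! ≡ (-1)^j C(M,j) (mod p)` for `j < p`. Hence `a_j ≡ 0 (mod p^3)` for `M < j < p`,
and `A` may be replaced by its truncation `F` of degree `M`; as `4M < p`, the truncated
coefficient sums of `F^3` and `F^4` are `F(1)^3` and `F(1)^4`. Finally
`F(1) ≡ ∑_{j≤M} (8j+1) C(M,j)^3 = p ∑_{j≤M} C(M,j)^3 (mod p)`, the identity coming from the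
symmetry `j ↦ M - j`, so `F(1)^m ≡ 0 (mod p^3)`.
-/

open Finset PowerSeries
open scoped Polynomial

theorem PowerSeries.coeff_mul_eq_sum_range {R : Type*} [CommSemiring R] (φ ψ : R⟦X⟧) (k : ℕ) :
    coeff k (φ * ψ) = ∑ j ∈ range (k + 1), coeff j φ * coeff (k - j) ψ := by
  rw [coeff_mul, Nat.sum_antidiagonal_eq_sum_range_succ (fun i j => coeff i φ * coeff j ψ)]

theorem PowerSeries.coeff_mk_pow_three {R : Type*} [CommSemiring R] (a : ℕ → R) (k : ℕ) :
    coeff k (mk a ^ 3) =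
      ∑ j ∈ range (k + 1), ∑ i ∈ range (k - j + 1), a j * a i * a (k - j - i) := by
  simp only [pow_succ', pow_zero, mul_one, coeff_mul_eq_sum_range, coeff_mk, mul_sum, mul_assoc]

theorem PowerSeries.coeff_mk_pow_four {R : Type*} [CommSemiring R] (a : ℕ → R) (k : ℕ) :
    coeff k (mk a ^ 4) = ∑ j ∈ range (k + 1), ∑ i ∈ range (k - j + 1),
      ∑ h ∈ range (k - j - i + 1), a j * a i * a h * a (k - j - i - h) := by
  simp only [pow_succ', pow_zero, mul_one, coeff_mul_eq_sum_range, coeff_mk, mul_sum, mul_assoc]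

namespace padicNorm

variable {p : ℕ} [Fact p.Prime] {t : ℚ}

theorem pow_eq (q : ℚ) (m : ℕ) : padicNorm p (q ^ m) = padicNorm p q ^ m :=
  IsAbsoluteValue.abv_pow (padicNorm p) q m

theorem prod_eq {ι : Type*} (s : Finset ι) (f : ι → ℚ) :
    padicNorm p (∏ i ∈ s, f i) = ∏ i ∈ s, padicNorm p (f i) :=
  map_prod (IsAbsoluteValue.abvHom (padicNorm p)) f s

theorem neg_one_pow_mul (j : ℕ) (q : ℚ) : padicNorm p ((-1) ^ j * q) = padicNorm p q := by
  rw [padicNorm.mul, pow_eq, padicNorm.neg, padicNorm.one, one_pow, one_mul]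

theorem mul_sub_mul_le {x x' y y' : ℚ} (hx' : padicNorm p x' ≤ 1) (hy : padicNorm p y ≤ 1)
    (hxx' : padicNorm p (x - x') ≤ t) (hyy' : padicNorm p (y - y') ≤ t) :
    padicNorm p (x * y - x' * y') ≤ t := by
  rw [show x * y - x' * y' = (x - x') * y + x' * (y - y') by ring]
  refine padicNorm.nonarchimedean.trans (max_le ?_ ?_) <;> rw [padicNorm.mul]
  · exact (mul_le_of_le_one_right (padicNorm.nonneg _) hy).trans hxx'
  · exact mul_le_of_le_one_left (padicNorm.nonneg _) hx' |>.trans hyy'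

theorem prod_sub_prod_le {ι : Type*} {s : Finset ι} {f g : ι → ℚ} (ht : 0 ≤ t)
    (hf : ∀ i ∈ s, padicNorm p (f i) ≤ 1) (hg : ∀ i ∈ s, padicNorm p (g i) ≤ 1)
    (hfg : ∀ i ∈ s, padicNorm p (f i - g i) ≤ t) :
    padicNorm p (∏ i ∈ s, f i - ∏ i ∈ s, g i) ≤ t := by
  classical
  induction s using Finset.cons_induction with
  | empty => simpa using ht
  | cons a s ha ih =>
    simp only [Finset.forall_mem_cons] at hf hg hfg
    rw [prod_cons, prod_cons]
    refine mul_sub_mul_le hg.1 ?_ hfg.1 (ih hf.2 hg.2 hfg.2)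
    rw [prod_eq]
    exact Finset.prod_le_one (fun _ _ => padicNorm.nonneg _) hf.2

theorem pow_sub_pow_le {x y : ℚ} (ht : 0 ≤ t) (hx : padicNorm p x ≤ 1) (hy : padicNorm p y ≤ 1)
    (hxy : padicNorm p (x - y) ≤ t) (m : ℕ) : padicNorm p (x ^ m - y ^ m) ≤ t := by
  simpa using prod_sub_prod_le (s := range m) (f := fun _ => x) (g := fun _ => y) ht
    (fun _ _ => hx) (fun _ _ => hy) (fun _ _ => hxy)

variable {n : ℕ}

theorem coeff_mul_sub_le {φ φ' ψ ψ' : ℚ⟦X⟧} (ht : 0 ≤ t)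
    (hφ' : ∀ k < n, padicNorm p (coeff k φ') ≤ 1) (hψ : ∀ k < n, padicNorm p (coeff k ψ) ≤ 1)
    (hφφ' : ∀ k < n, padicNorm p (coeff k φ - coeff k φ') ≤ t)
    (hψψ' : ∀ k < n, padicNorm p (coeff k ψ - coeff k ψ') ≤ t) :
    ∀ k < n, padicNorm p (coeff k (φ * ψ) - coeff k (φ' * ψ')) ≤ t := by
  intro k hk
  rw [coeff_mul, coeff_mul, ← sum_sub_distrib]
  refine sum_le' (fun ij hij => ?_) ht
  have hij := mem_antidiagonal.1 hij
  have hi : ij.1 < n := by omega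
  have hj : ij.2 < n := by omega
  exact mul_sub_mul_le (hφ' _ hi) (hψ _ hj) (hφφ' _ hi) (hψψ' _ hj)

theorem coeff_pow_le_one {φ : ℚ⟦X⟧} (hφ : ∀ k < n, padicNorm p (coeff k φ) ≤ 1) (m : ℕ) :
    ∀ k < n, padicNorm p (coeff k (φ ^ m)) ≤ 1 := by
  induction m with
  | zero =>
    intro k _
    rw [pow_zero, coeff_one]
    split_ifs <;> simp
  | succ m ih =>
    intro k hk
    -- integrality is the congruence with `t = 1` against the zero series
    have := coeff_mul_sub_le (φ' := 0) (ψ' := 0) zero_le_one (by simp) ih (by simpa using hφ)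
      (by simpa using ih) k hk
    rw [pow_succ']
    simpa using this

theorem coeff_pow_sub_le {φ ψ : ℚ⟦X⟧} (ht : 0 ≤ t) (hφ : ∀ k < n, padicNorm p (coeff k φ) ≤ 1)
    (hψ : ∀ k < n, padicNorm p (coeff k ψ) ≤ 1)
    (hφψ : ∀ k < n, padicNorm p (coeff k φ - coeff k ψ) ≤ t) (m : ℕ) :
    ∀ k < n, padicNorm p (coeff k (φ ^ m) - coeff k (ψ ^ m)) ≤ t := by
  induction m with
  | zero => intro k _; simpa using ht
  | succ m ih =>
    simp only [pow_succ']
    exact coeff_mul_sub_le ht hψ (coeff_pow_le_one hφ m) hφψ ih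

theorem sum_coeff_pow_sub_eval_pow_le {φ : ℚ⟦X⟧} {F : ℚ[X]} (ht : 0 ≤ t)
    (hφ : ∀ k < n, padicNorm p (coeff k φ) ≤ 1) (hF : ∀ k < n, padicNorm p (F.coeff k) ≤ 1)
    (hφF : ∀ k < n, padicNorm p (coeff k φ - F.coeff k) ≤ t) {m : ℕ}
    (hdeg : m * F.natDegree < n) :
    padicNorm p (∑ k ∈ range n, coeff k (φ ^ m) - F.eval 1 ^ m) ≤ t := by
  have hFm : F.eval 1 ^ m = ∑ k ∈ range n, coeff k ((F : ℚ⟦X⟧) ^ m) := by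
    rw [← Polynomial.eval_pow,
      Polynomial.eval_eq_sum_range' (Polynomial.natDegree_pow_le.trans_lt hdeg)]
    simp [← Polynomial.coe_pow, Polynomial.coeff_coe]
  rw [hFm, ← sum_sub_distrib]
  refine sum_le' (fun k hk => ?_) ht
  refine coeff_pow_sub_le ht hφ ?_ ?_ m k (mem_range.1 hk) <;> simpa [Polynomial.coeff_coe]

end padicNorm

theorem ratCongr_zero_of_padicNorm_le {p m : ℕ} [Fact p.Prime] {q : ℚ}
    (h : padicNorm p q ≤ (p : ℚ) ^ (-(m : ℤ))) : ratCongr p m q 0 := by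
  rcases eq_or_ne q 0 with rfl | hq
  · exact Or.inl rfl
  · right
    rw [padicNorm.eq_zpow_of_nonzero hq,
      zpow_le_zpow_iff_right₀ (by exact_mod_cast (Fact.out : p.Prime).one_lt)] at h
    rw [sub_zero]; omega

theorem prod_range_natCast_sub_natCast (M j : ℕ) :
    ∏ i ∈ range j, ((i : ℚ) - M) = (-1) ^ j * j.factorial * M.choose j := by
  have h := descPochhammer_eval_eq_prod_range (R := ℚ) j M
  rw [descPochhammer_eval_eq_descFactorial, Nat.descFactorial_eq_factorial_mul_choose] at h
  calc ∏ i ∈ range j, ((i : ℚ) - M) = ∏ i ∈ range j, ((-1) * ((M : ℚ) - i)) :=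
        prod_congr rfl fun _ _ => by ring
    _ = (-1) ^ j * j.factorial * M.choose j := by
        rw [prod_mul_distrib, prod_const, card_range, ← h]; push_cast; ring

theorem two_mul_sum_mul_choose_pow (M k : ℕ) :
    2 * ∑ j ∈ range (M + 1), j * M.choose j ^ k = M * ∑ j ∈ range (M + 1), M.choose j ^ k := by
  have hreflect : ∑ j ∈ range (M + 1), j * M.choose j ^ k
      = ∑ j ∈ range (M + 1), (M - j) * M.choose j ^ k := by
    rw [← sum_range_reflect]
    refine sum_congr rfl fun j hj => ?_
    have hj := mem_range.1 hj
    rw [show M + 1 - 1 - j = M - j by omega, Nat.choose_symm (by omega)]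
  rw [two_mul, mul_sum]
  nth_rw 2 [hreflect]
  rw [← sum_add_distrib]
  refine sum_congr rfl fun j hj => ?_
  have hj := mem_range.1 hj
  rw [← add_mul]; congr 1; omega

theorem sum_eight_mul_add_one_mul_choose_pow_three (M : ℕ) :
    ∑ j ∈ range (M + 1), (8 * j + 1 : ℚ) * M.choose j ^ 3
      = (4 * M + 1) * ∑ j ∈ range (M + 1), (M.choose j : ℚ) ^ 3 := by
  have h : 2 * ∑ j ∈ range (M + 1), (j : ℚ) * M.choose j ^ 3
      = M * ∑ j ∈ range (M + 1), (M.choose j : ℚ) ^ 3 := by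
    exact_mod_cast two_mul_sum_mul_choose_pow M 3
  simp only [add_mul, one_mul, sum_add_distrib, mul_assoc, ← mul_sum]
  linear_combination 4 * h

section RamanujanSeries

variable {p : ℕ} [Fact p.Prime]

def quarterCoeff (j : ℕ) : ℚ := poch (1 / 4) j / j.factorial

def ramanujanTerm (j : ℕ) : ℚ := (-1) ^ j * (8 * j + 1) * quarterCoeff j ^ 3

theorem padicNorm_four (hp2 : p ≠ 2) : padicNorm p 4 = 1 := by
  have h := (padicNorm.nat_eq_one_iff (p := p) 4).2 fun h4 =>
    hp2 ((Nat.prime_dvd_prime_iff_eq Fact.out Nat.prime_two).1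
      (Nat.Prime.dvd_of_dvd_pow Fact.out (show p ∣ 2 ^ 2 from h4)))
  exact_mod_cast h

theorem padicNorm_factorial (j : ℕ) (hj : j < p) : padicNorm p (j.factorial : ℚ) = 1 :=
  (padicNorm.nat_eq_one_iff _).2 fun h => by
    have := (Nat.Prime.dvd_factorial Fact.out).1 h; omega

theorem padicNorm_quarter_add_le_one (hp2 : p ≠ 2) (i : ℕ) : padicNorm p (1 / 4 + i) ≤ 1 := by
  rw [show (1 / 4 + i : ℚ) = ((4 * i + 1 : ℕ) : ℚ) / 4 by push_cast; ring, padicNorm.div,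
    padicNorm_four hp2, div_one]
  exact padicNorm.of_nat _

theorem padicNorm_quarterCoeff_le_one (hp2 : p ≠ 2) {j : ℕ} (hj : j < p) :
    padicNorm p (quarterCoeff j) ≤ 1 := by
  rw [quarterCoeff, padicNorm.div, padicNorm_factorial j hj, div_one, poch, padicNorm.prod_eq]
  exact prod_le_one (fun _ _ => padicNorm.nonneg _) fun i _ => padicNorm_quarter_add_le_one hp2 i

theorem padicNorm_quarterCoeff_sub_le {M j : ℕ} (hM : p = 4 * M + 1) (hj : j < p) :
    padicNorm p (quarterCoeff j - (-1) ^ j * M.choose j) ≤ (p : ℚ)⁻¹ := by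
  have hp2 : p ≠ 2 := by omega
  have hsplit : quarterCoeff j - (-1) ^ j * M.choose j
      = (poch (1 / 4) j - ∏ i ∈ range j, ((i : ℚ) - M)) / j.factorial := by
    rw [prod_range_natCast_sub_natCast, quarterCoeff]; field_simp
  rw [hsplit, padicNorm.div, padicNorm_factorial j hj, div_one, poch]
  refine padicNorm.prod_sub_prod_le (by positivity) (fun i _ => padicNorm_quarter_add_le_one hp2 i)
    (fun i _ => ?_) (fun i _ => ?_)
  · exact_mod_cast padicNorm.of_int (p := p) (i - M : ℤ)
  · rw [show (1 / 4 + i : ℚ) - (i - M) = p / 4 by rw [hM]; push_cast; ring, padicNorm.div,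
      padicNorm.padicNorm_p_of_prime, padicNorm_four hp2, div_one]

theorem padicNorm_neg_one_pow_mul_eight_mul_add_one_mul_le (j : ℕ) (q : ℚ) :
    padicNorm p ((-1) ^ j * (8 * j + 1) * q) ≤ padicNorm p q := by
  rw [padicNorm.mul, padicNorm.neg_one_pow_mul]
  exact mul_le_of_le_one_left (padicNorm.nonneg _) (mod_cast padicNorm.of_nat (8 * j + 1))

theorem padicNorm_ramanujanTerm_le_one (hp2 : p ≠ 2) {j : ℕ} (hj : j < p) :
    padicNorm p (ramanujanTerm j) ≤ 1 := by
  refine (padicNorm_neg_one_pow_mul_eight_mul_add_one_mul_le j _).trans ?_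
  rw [padicNorm.pow_eq]
  exact pow_le_one₀ (padicNorm.nonneg _) (padicNorm_quarterCoeff_le_one hp2 hj)

theorem padicNorm_ramanujanTerm_le {M j : ℕ} (hM : p = 4 * M + 1) (hMj : M < j) (hj : j < p) :
    padicNorm p (ramanujanTerm j) ≤ (p : ℚ) ^ (-3 : ℤ) := by
  have hc := padicNorm_quarterCoeff_sub_le hM hj
  rw [Nat.choose_eq_zero_of_lt hMj, Nat.cast_zero, mul_zero, sub_zero] at hc
  refine (padicNorm_neg_one_pow_mul_eight_mul_add_one_mul_le j _).trans ?_
  rw [padicNorm.pow_eq, zpow_neg, ← inv_zpow, zpow_ofNat]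
  exact pow_le_pow_left₀ (padicNorm.nonneg _) hc 3

theorem padicNorm_ramanujanTerm_sub_le {M j : ℕ} (hM : p = 4 * M + 1) (hj : j < p) :
    padicNorm p (ramanujanTerm j - (8 * j + 1) * M.choose j ^ 3) ≤ (p : ℚ)⁻¹ := by
  have hp2 : p ≠ 2 := by omega
  have hsign : ((-1 : ℚ) ^ j) ^ 4 = 1 := by rw [← pow_mul, mul_comm, pow_mul]; norm_num
  have hsplit : ramanujanTerm j - (8 * j + 1) * M.choose j ^ 3
      = (-1) ^ j * (8 * j + 1) * (quarterCoeff j ^ 3 - ((-1) ^ j * M.choose j) ^ 3) := by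
    rw [ramanujanTerm]; linear_combination (8 * j + 1) * (M.choose j : ℚ) ^ 3 * hsign
  have hchoose : padicNorm p ((-1) ^ j * M.choose j) ≤ 1 := by
    rw [padicNorm.neg_one_pow_mul]; exact padicNorm.of_nat _
  rw [hsplit]
  exact (padicNorm_neg_one_pow_mul_eight_mul_add_one_mul_le j _).trans
    (padicNorm.pow_sub_pow_le (by positivity) (padicNorm_quarterCoeff_le_one hp2 hj) hchoose
      (padicNorm_quarterCoeff_sub_le hM hj) 3)

theorem padicNorm_sum_ramanujanTerm_le {M : ℕ} (hM : p = 4 * M + 1) :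
    padicNorm p (∑ j ∈ range (M + 1), ramanujanTerm j) ≤ (p : ℚ)⁻¹ := by
  have hsplit : ∑ j ∈ range (M + 1), ramanujanTerm j
      = ∑ j ∈ range (M + 1), (ramanujanTerm j - (8 * j + 1) * M.choose j ^ 3)
        + p * ∑ j ∈ range (M + 1), (M.choose j : ℚ) ^ 3 := by
    rw [sum_sub_distrib, sum_eight_mul_add_one_mul_choose_pow_three, hM]; push_cast; ring
  rw [hsplit]
  refine padicNorm.nonarchimedean.trans (max_le ?_ ?_)
  · exact padicNorm.sum_le' (fun j hj => padicNorm_ramanujanTerm_sub_le hM (by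
      have := mem_range.1 hj; omega)) (by positivity)
  · rw [padicNorm.mul, padicNorm.padicNorm_p_of_prime]
    refine mul_le_of_le_one_right (by positivity) ?_
    exact_mod_cast padicNorm.of_nat (p := p) (∑ j ∈ range (M + 1), M.choose j ^ 3)

theorem padicNorm_sum_coeff_pow_le {M m : ℕ} (hM : p = 4 * M + 1) (hm3 : 3 ≤ m) (hm4 : m ≤ 4) :
    padicNorm p (∑ k ∈ range p, coeff k (mk ramanujanTerm ^ m)) ≤ (p : ℚ) ^ (-3 : ℤ) := by
  have hp2 : p ≠ 2 := by omega
  set F := trunc (M + 1) (mk ramanujanTerm)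
  have ht : (0 : ℚ) ≤ (p : ℚ) ^ (-3 : ℤ) := by positivity
  have hφ : ∀ k < p, padicNorm p (coeff k (mk ramanujanTerm)) ≤ 1 := fun k hk => by
    rw [coeff_mk]; exact padicNorm_ramanujanTerm_le_one hp2 hk
  have hF : ∀ k < p, padicNorm p (F.coeff k) ≤ 1 := fun k hk => by
    rw [coeff_trunc]; split_ifs
    · exact hφ k hk
    · simp
  have hφF : ∀ k < p, padicNorm p (coeff k (mk ramanujanTerm) - F.coeff k) ≤ (p : ℚ) ^ (-3 : ℤ) :=
    fun k hk => by
      rw [coeff_trunc, coeff_mk]; split_ifs with hkM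
      · simp
      · simpa using padicNorm_ramanujanTerm_le hM (by omega) hk
  have hdeg : m * F.natDegree < p := by
    have := natDegree_trunc_lt (mk ramanujanTerm) M
    nlinarith
  have hclose := padicNorm.sum_coeff_pow_sub_eval_pow_le ht hφ hF hφF hdeg
  have hA : padicNorm p (F.eval 1 ^ m) ≤ (p : ℚ) ^ (-3 : ℤ) := by
    have hA1 : F.eval 1 = ∑ j ∈ range (M + 1), ramanujanTerm j := by
      simp [F, Polynomial.eval, eval₂_trunc_eq_sum_range]
    have hp1 : (p : ℚ)⁻¹ ≤ 1 :=
      inv_le_one_of_one_le₀ (by exact_mod_cast (Fact.out : p.Prime).one_le)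
    rw [padicNorm.pow_eq, hA1, zpow_neg, ← inv_zpow, zpow_ofNat]
    exact (pow_le_pow_left₀ (padicNorm.nonneg _) (padicNorm_sum_ramanujanTerm_le hM) m).trans
      (pow_le_pow_of_le_one (by positivity) hp1 hm3)
  calc _ = padicNorm p ((∑ k ∈ range p, coeff k (mk ramanujanTerm ^ m) - F.eval 1 ^ m)
        + F.eval 1 ^ m) := by rw [sub_add_cancel]
    _ ≤ _ := padicNorm.nonarchimedean.trans (max_le hclose hA)

end RamanujanSeries

theorem stmt_7 (p : ℕ) (hp : p.Prime) (hmod : p % 4 = 1) :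
    ratCongr p 3
      (∑ k ∈ Finset.range p, ∑ j ∈ Finset.range (k + 1), ∑ i ∈ Finset.range (k - j + 1),
        (-1 : ℚ) ^ k * ((poch (1/4) (j)) ^ 3 / ((j).factorial : ℚ) ^ 3) *
          ((poch (1/4) (i)) ^ 3 / ((i).factorial : ℚ) ^ 3) *
          ((poch (1/4) (k - j - i)) ^ 3 / ((k - j - i).factorial : ℚ) ^ 3) *
          (8 * ((i : ℕ) : ℚ) + 1) * (8 * ((j : ℕ) : ℚ) + 1) * (8 * ((k - j - i : ℕ) : ℚ) + 1))
      0 ∧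
    ratCongr p 3
      (∑ k ∈ Finset.range p, ∑ j ∈ Finset.range (k + 1), ∑ i ∈ Finset.range (k - j + 1),
        ∑ h ∈ Finset.range (k - j - i + 1),
        (-1 : ℚ) ^ k * ((poch (1/4) (j)) ^ 3 / ((j).factorial : ℚ) ^ 3) *
          ((poch (1/4) (i)) ^ 3 / ((i).factorial : ℚ) ^ 3) *
          ((poch (1/4) (h)) ^ 3 / ((h).factorial : ℚ) ^ 3) *
          ((poch (1/4) (k - j - i - h)) ^ 3 / ((k - j - i - h).factorial : ℚ) ^ 3) *
          (8 * ((i : ℕ) : ℚ) + 1) * (8 * ((j : ℕ) : ℚ) + 1) * (8 * ((h : ℕ) : ℚ) + 1) * (8 * ((k - j - i - h : ℕ) : ℚ) + 1))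
      0 := by
  have := Fact.mk hp
  obtain ⟨M, hM⟩ : ∃ M, p = 4 * M + 1 := ⟨p / 4, by omega⟩
  constructor <;> apply ratCongr_zero_of_padicNorm_le <;> rw [Nat.cast_ofNat]
  · convert padicNorm_sum_coeff_pow_le hM le_rfl (by norm_num) using 2
    refine sum_congr rfl fun k _ => ?_
    rw [coeff_mk_pow_three]
    refine sum_congr rfl fun j hj => sum_congr rfl fun i hi => ?_
    obtain ⟨l, rfl⟩ : ∃ l, k = j + i + l := ⟨k - j - i, by simp at hj hi; omega⟩
    simp only [ramanujanTerm, quarterCoeff, show j + i + l - j - i = l by omega, pow_add]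
    ring
  · convert padicNorm_sum_coeff_pow_le hM (by norm_num) le_rfl using 2
    refine sum_congr rfl fun k _ => ?_
    rw [coeff_mk_pow_four]
    refine sum_congr rfl fun j hj => sum_congr rfl fun i hi => sum_congr rfl fun h hh => ?_
    obtain ⟨l, rfl⟩ : ∃ l, k = j + i + h + l := ⟨k - j - i - h, by simp at hj hi hh; omega⟩
    simp only [ramanujanTerm, quarterCoeff, show j + i + h + l - j - i - h = l by omega, pow_add]
    ring
end
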